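/- (Restriction property of descents) Let n, m ≥ 0 and u ∈ X_{(n,m)} (permutations in S_{n+m} increasing on [1,n] and on [n+1,n+m]). If α_1, α_2 ∈ S_n have the same descent set and β_1, β_2 ∈ S_m have the same descent set, then (α_1 × β_1)u^{-1} and (α_2 × β_2)u^{-1} have the same descent set in S_{n+m}. -/
import Mathlib

/-- The value of a permutation of `Fin n` at a natural-number position
(0-based); positions outside `[0,n)` are fixed. -/
def pval (n : ℕ) (σ : Equiv.Perm (Fin n)) (i : ℕ) : ℕ :=
  if h : i < n then (σ ⟨i, h⟩ : ℕ) else i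

/-- The simple transposition `s_i` exchanging positions `i` and `i+1` (0-based). -/
def sT (n i : ℕ) (h : i + 1 < n) : Equiv.Perm (Fin n) :=
  Equiv.swap ⟨i, Nat.lt_of_succ_lt h⟩ ⟨i + 1, h⟩

/-- The (0-based) descent set of a permutation: `{i ∈ [0,n-2] : σ(i) > σ(i+1)}`. -/
def Des (n : ℕ) (σ : Equiv.Perm (Fin n)) : Finset ℕ :=
  (Finset.range (n - 1)).filter fun i => pval n σ (i + 1) < pval n σ i

/-- The direct product `α × β ∈ S_{n+m}` acting by `α` on the first block and by `β`
on the second block. -/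
def prodPerm (n m : ℕ) (α : Equiv.Perm (Fin n)) (β : Equiv.Perm (Fin m)) :
    Equiv.Perm (Fin (n + m)) :=
  (finSumFinEquiv : Fin n ⊕ Fin m ≃ Fin (n + m)).permCongr (Equiv.sumCongr α β)

/-- `X_{(n,m)}`: permutations of `Fin (n+m)` increasing on each of the two blocks. -/
def Xnm (n m : ℕ) : Set (Equiv.Perm (Fin (n + m))) :=
  {u | ∀ a b : Fin (n + m), a < b → ((b : ℕ) < n ∨ n ≤ (a : ℕ)) → u a < u b}

lemma prodPerm_lt (n m : ℕ) (α : Equiv.Perm (Fin n)) (β : Equiv.Perm (Fin m))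
    (x : Fin (n + m)) (h : (x : ℕ) < n) :
    ((prodPerm n m α β x : Fin (n + m)) : ℕ) = α ⟨x, h⟩ := by
  have hs : finSumFinEquiv.symm x = Sum.inl ⟨(x : ℕ), h⟩ := by
    rw [Equiv.symm_apply_eq]; ext; simp
  simp [prodPerm, Equiv.permCongr_apply, hs]

lemma prodPerm_ge (n m : ℕ) (α : Equiv.Perm (Fin n)) (β : Equiv.Perm (Fin m))
    (x : Fin (n + m)) (h : n ≤ (x : ℕ)) :
    ((prodPerm n m α β x : Fin (n + m)) : ℕ) = n + β ⟨(x : ℕ) - n, by omega⟩ := by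
  have hs : finSumFinEquiv.symm x = Sum.inr ⟨(x : ℕ) - n, by omega⟩ := by
    rw [Equiv.symm_apply_eq]; ext; simp; omega
  simp [prodPerm, Equiv.permCongr_apply, hs]

lemma consec (n m : ℕ) (u : Equiv.Perm (Fin (n + m))) (hu : u ∈ Xnm n m)
    {i : ℕ} (h1 : i < n + m) (h2 : i + 1 < n + m)
    (hc : (((u⁻¹ ⟨i, h1⟩ : Fin (n + m)) : ℕ) < n ∧ ((u⁻¹ ⟨i + 1, h2⟩ : Fin (n + m)) : ℕ) < n)
      ∨ (n ≤ ((u⁻¹ ⟨i, h1⟩ : Fin (n + m)) : ℕ) ∧ n ≤ ((u⁻¹ ⟨i + 1, h2⟩ : Fin (n + m)) : ℕ))) :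
    ((u⁻¹ ⟨i + 1, h2⟩ : Fin (n + m)) : ℕ) = ((u⁻¹ ⟨i, h1⟩ : Fin (n + m)) : ℕ) + 1 := by
  set a := u⁻¹ ⟨i, h1⟩ with ha
  set b := u⁻¹ ⟨i + 1, h2⟩ with hb
  have hua : u a = ⟨i, h1⟩ := by simp [ha]
  have hub : u b = ⟨i + 1, h2⟩ := by simp [hb]
  have hab : (a : ℕ) < (b : ℕ) := by
    rcases Nat.lt_trichotomy (a : ℕ) (b : ℕ) with h | h | h
    · exact h
    · exfalso
      have : a = b := Fin.ext h
      rw [this, hub] at hua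
      simpa using congrArg Fin.val hua
    · exfalso
      have := hu b a (by exact h) (by omega)
      rw [hua, hub] at this
      simp [Fin.lt_def] at this
  by_contra hne
  have hlt : (a : ℕ) + 1 < (b : ℕ) := by omega
  have hcn : (a : ℕ) + 1 < n + m := lt_trans hlt b.isLt
  set c : Fin (n + m) := ⟨(a : ℕ) + 1, hcn⟩ with hcdef
  have hcv : (c : ℕ) = (a : ℕ) + 1 := rfl
  have cond1 : (c : ℕ) < n ∨ n ≤ (a : ℕ) := by
    rw [hcv]; rcases hc with ⟨_, h'⟩ | ⟨h', _⟩ <;> omega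
  have cond2 : (b : ℕ) < n ∨ n ≤ (c : ℕ) := by
    rw [hcv]; rcases hc with ⟨_, h'⟩ | ⟨h', _⟩ <;> omega
  have h1' := hu a c (by rw [Fin.lt_def, hcv]; omega) cond1
  have h2' := hu c b (by rw [Fin.lt_def]; omega) cond2
  rw [hua] at h1'
  rw [hub] at h2'
  simp [Fin.lt_def] at h1' h2'
  omega

lemma mem_Des_iff (n : ℕ) (α : Equiv.Perm (Fin n)) {a : ℕ} (h : a + 1 < n) :
    a ∈ Des n α ↔ ((α ⟨a + 1, h⟩ : ℕ) < (α ⟨a, by omega⟩ : ℕ)) := by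
  unfold Des pval
  rw [Finset.mem_filter, Finset.mem_range, dif_pos h, dif_pos (show a < n by omega)]
  exact ⟨fun h' => h'.2, fun h' => ⟨by omega, h'⟩⟩

/-- Restriction property of descents: for `u ∈ X_{(n,m)}`, the descent set of
`(α × β) u⁻¹` depends only on the descent sets of `α` and `β`. -/
theorem des_restriction (n m : ℕ) (u : Equiv.Perm (Fin (n + m))) (hu : u ∈ Xnm n m)
    (α₁ α₂ : Equiv.Perm (Fin n)) (β₁ β₂ : Equiv.Perm (Fin m))
    (hα : Des n α₁ = Des n α₂) (hβ : Des m β₁ = Des m β₂) :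
    Des (n + m) (prodPerm n m α₁ β₁ * u⁻¹) =
      Des (n + m) (prodPerm n m α₂ β₂ * u⁻¹) := by
  unfold Des
  apply Finset.filter_congr
  intro i hi
  rw [Finset.mem_range] at hi
  have h1 : i < n + m := by omega
  have h2 : i + 1 < n + m := by omega
  set a := u⁻¹ ⟨i, h1⟩ with ha
  set b := u⁻¹ ⟨i + 1, h2⟩ with hb
  have e1 : ∀ P : Equiv.Perm (Fin (n + m)), pval (n + m) (P * u⁻¹) i = ((P a : Fin (n + m)) : ℕ) := by
    intro P; unfold pval; rw [dif_pos h1]; rfl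
  have e2 : ∀ P : Equiv.Perm (Fin (n + m)),
      pval (n + m) (P * u⁻¹) (i + 1) = ((P b : Fin (n + m)) : ℕ) := by
    intro P; unfold pval; rw [dif_pos h2]; rfl
  rw [e1, e1, e2, e2]
  rcases lt_or_ge (a : ℕ) n with han | han <;> rcases lt_or_ge (b : ℕ) n with hbn | hbn
  · -- both in first block
    have hba : (b : ℕ) = (a : ℕ) + 1 := consec n m u hu h1 h2 (Or.inl ⟨han, hbn⟩)
    have han1 : (a : ℕ) + 1 < n := by omega
    rw [prodPerm_lt n m α₁ β₁ a han, prodPerm_lt n m α₁ β₁ b hbn,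
        prodPerm_lt n m α₂ β₂ a han, prodPerm_lt n m α₂ β₂ b hbn]
    have hfin : (⟨(b : ℕ), hbn⟩ : Fin n) = ⟨(a : ℕ) + 1, han1⟩ := Fin.ext hba
    rw [hfin, ← mem_Des_iff n α₁ han1, ← mem_Des_iff n α₂ han1, hα]
  · -- a first block, b second: no descent either way
    have l1 : ((prodPerm n m α₁ β₁ a : Fin (n + m)) : ℕ) < n := by
      rw [prodPerm_lt n m α₁ β₁ a han]; exact (α₁ _).isLt
    have l2 : n ≤ ((prodPerm n m α₁ β₁ b : Fin (n + m)) : ℕ) := by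
      rw [prodPerm_ge n m α₁ β₁ b hbn]; omega
    have l3 : ((prodPerm n m α₂ β₂ a : Fin (n + m)) : ℕ) < n := by
      rw [prodPerm_lt n m α₂ β₂ a han]; exact (α₂ _).isLt
    have l4 : n ≤ ((prodPerm n m α₂ β₂ b : Fin (n + m)) : ℕ) := by
      rw [prodPerm_ge n m α₂ β₂ b hbn]; omega
    constructor <;> intro h' <;> omega
  · -- a second block, b first: descent both ways
    have l1 : n ≤ ((prodPerm n m α₁ β₁ a : Fin (n + m)) : ℕ) := by
      rw [prodPerm_ge n m α₁ β₁ a han]; omega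
    have l2 : ((prodPerm n m α₁ β₁ b : Fin (n + m)) : ℕ) < n := by
      rw [prodPerm_lt n m α₁ β₁ b hbn]; exact (α₁ _).isLt
    have l3 : n ≤ ((prodPerm n m α₂ β₂ a : Fin (n + m)) : ℕ) := by
      rw [prodPerm_ge n m α₂ β₂ a han]; omega
    have l4 : ((prodPerm n m α₂ β₂ b : Fin (n + m)) : ℕ) < n := by
      rw [prodPerm_lt n m α₂ β₂ b hbn]; exact (α₂ _).isLt
    constructor <;> intro h' <;> omega
  · -- both in second block
    have hba : (b : ℕ) = (a : ℕ) + 1 := consec n m u hu h1 h2 (Or.inr ⟨han, hbn⟩)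
    have hm : (a : ℕ) - n + 1 < m := by have := b.isLt; omega
    rw [prodPerm_ge n m α₁ β₁ a han, prodPerm_ge n m α₁ β₁ b hbn,
        prodPerm_ge n m α₂ β₂ a han, prodPerm_ge n m α₂ β₂ b hbn]
    have hfin : ∀ h' : (b : ℕ) - n < m, (⟨(b : ℕ) - n, h'⟩ : Fin m) = ⟨(a : ℕ) - n + 1, hm⟩ :=
      fun h' => Fin.ext (by simp; omega)
    rw [hfin, Nat.add_lt_add_iff_left, Nat.add_lt_add_iff_left,
        ← mem_Des_iff m β₁ hm, ← mem_Des_iff m β₂ hm, hβ]
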